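/- arXiv:1512.02861 — 5 statements merged into one kernel-verified Lean document; each statement's English description precedes it below -/
import Mathlib

section
/- Skorokhod's lemma: Let b : [0,∞) → ℝ be a continuous function with b(0) = 0 and let x₀ ≥ 0. Then there exists a unique pair of continuous functions x, l : [0,∞) → ℝ such that (i) x(0) = x₀ and x(t) ≥ 0 for all t ≥ 0; (ii) l is non-decreasing with l(0) = 0; (iii) l increases only where x = 0, i.e. l is constant on every interval on which x is strictly positive (for all t₁ ≤ t₂, if x(u) > 0 for all u ∈ [t₁,t₂] then l(t₁) = l(t₂)); (iv) x(t) = x₀ + l(t) + b(t) for all t ≥ 0. Moreover the solution is given explicitly by l(t) = max(0, −m(t) − x₀) and x(t) = x₀ + b(t) + max(0, −m(t) − x₀), where m(t) = min_{0 ≤ t' ≤ t} b(t'). -/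
/-!
Any admissible regulator `l` dominates `max 0 (-m t - x₀)`, because for `s ≤ t` we have
`l t ≥ l s = x s - x₀ - b s ≥ -x₀ - b s`. Conversely `l t = l s` at the last zero `s ≤ t`
of `x` (or `l t = l 0 = 0` if there is none), and there `l s = -x₀ - b s ≤ -x₀ - m t`.
So every solution is the explicit one, and the explicit one is checked to be a solution.
-/

open Set

/-- A pair `(x, l)` of functions on `[0, ∞)` satisfying the conditions of Skorokhod's lemma
for the continuous function `b` (with `b 0 = 0`) and initial condition `x₀ ≥ 0`:
(i) `x 0 = x₀` and `x t ≥ 0` for all `t ≥ 0`;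
(ii) `l` is non-decreasing on `[0, ∞)` with `l 0 = 0`;
(iii) `l` increases only where `x = 0`, i.e. `l` is constant on every interval
on which `x` is strictly positive;
(iv) `x t = x₀ + l t + b t` for all `t ≥ 0`;
both `x` and `l` being continuous on `[0, ∞)`. -/
def SkorokhodPair (b : ℝ → ℝ) (x₀ : ℝ) (x l : ℝ → ℝ) : Prop :=
  ContinuousOn x (Ici 0) ∧ ContinuousOn l (Ici 0) ∧
  x 0 = x₀ ∧ (∀ t, 0 ≤ t → 0 ≤ x t) ∧
  l 0 = 0 ∧ (∀ t₁ t₂, 0 ≤ t₁ → t₁ ≤ t₂ → l t₁ ≤ l t₂) ∧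
  (∀ t₁ t₂, 0 ≤ t₁ → t₁ ≤ t₂ → (∀ u, t₁ ≤ u → u ≤ t₂ → 0 < x u) → l t₁ = l t₂) ∧
  (∀ t, 0 ≤ t → x t = x₀ + l t + b t)

theorem ContinuousOn.apply_eq_of_forall_mem_Ioc {α Y : Type*} [TopologicalSpace α]
    [LinearOrder α] [OrderTopology α] [DenselyOrdered α] [TopologicalSpace Y] [T2Space Y]
    {f : α → Y} {s t : α}
    (hf : ContinuousOn f (Icc s t)) (hst : s ≤ t) (h : ∀ u ∈ Ioc s t, f u = f t) :
    f s = f t := by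
  rcases hst.eq_or_lt with rfl | hlt
  · rfl
  exact EqOn.of_subset_closure (g := fun _ => f t) h hf continuousOn_const Ioc_subset_Icc_self
    (closure_Ioc hlt.ne).ge (left_mem_Icc.2 hst)

noncomputable def runningInf (b : ℝ → ℝ) (t : ℝ) : ℝ := sInf (b '' Icc 0 t)

section RunningInf

variable {b : ℝ → ℝ} {s t : ℝ}

theorem runningInf_zero : runningInf b 0 = b 0 := by
  simp [runningInf]

theorem le_runningInf {c : ℝ} (ht : 0 ≤ t) (h : ∀ s ∈ Icc 0 t, c ≤ b s) : c ≤ runningInf b t :=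
  le_csInf ((nonempty_Icc.2 ht).image b) (forall_mem_image.2 h)

theorem runningInf_le (hb : ContinuousOn b (Ici 0)) (hs : s ∈ Icc 0 t) :
    runningInf b t ≤ b s :=
  (hb.mono Icc_subset_Ici_self).sInf_image_Icc_le hs

theorem exists_eq_runningInf (hb : ContinuousOn b (Ici 0)) (ht : 0 ≤ t) :
    ∃ s ∈ Icc 0 t, b s = runningInf b t :=
  (isCompact_Icc.image_of_continuousOn (hb.mono Icc_subset_Ici_self)).sInf_mem
    ((nonempty_Icc.2 ht).image b)

theorem antitoneOn_runningInf (hb : ContinuousOn b (Ici 0)) :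
    AntitoneOn (runningInf b) (Ici 0) :=
  fun _ hs _ _ hst => le_runningInf hs fun _ hu => runningInf_le hb ⟨hu.1, hu.2.trans hst⟩

/-- Rescaling `Icc 0 t` to `Icc 0 1` turns the running infimum into an infimum over a fixed
compact set of a jointly continuous function of `(t, s)`. -/
theorem continuousOn_runningInf (hb : ContinuousOn b (Ici 0)) :
    ContinuousOn (runningInf b) (Ici 0) := by
  have hb' : Continuous fun u => b (max u 0) :=
    hb.comp_continuous (continuous_id.max continuous_const) fun u => le_max_right u 0
  have hjoint : Continuous ↿fun t s : ℝ => b (max (t * s) 0) :=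
    hb'.comp (continuous_fst.mul continuous_snd)
  refine (isCompact_Icc.continuous_sInf (K := Icc (0 : ℝ) 1) hjoint).continuousOn.congr
    fun t (ht : 0 ≤ t) => ?_
  have hIcc : Icc 0 t = (t * ·) '' Icc 0 1 := by
    rw [image_mul_left_Icc ht zero_le_one, mul_zero, mul_one]
  rw [runningInf, hIcc, image_image]
  exact congrArg sInf (image_congr fun s hs => by rw [max_eq_left (mul_nonneg ht hs.1)])

end RunningInf

noncomputable def skorokhodRegulator (b : ℝ → ℝ) (x₀ t : ℝ) : ℝ :=
  max 0 (-runningInf b t - x₀)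

section Skorokhod

variable {b x l : ℝ → ℝ} {x₀ t : ℝ}

theorem monotoneOn_skorokhodRegulator (hb : ContinuousOn b (Ici 0)) :
    MonotoneOn (skorokhodRegulator b x₀) (Ici 0) := fun _ hs _ ht hst =>
  max_le_max le_rfl (sub_le_sub_right (neg_le_neg (antitoneOn_runningInf hb hs ht hst)) _)

/-- Let `b` attain `runningInf b t₂` at `s ≤ t₂`. If `s ≤ t₁` the running infima at `t₁` and `t₂`
agree; otherwise the path equals `max (x₀ + b s) 0 > 0` at `s`, which forces the regulator to
vanish at `t₂`. -/
theorem skorokhodRegulator_eq_of_pos (hb : ContinuousOn b (Ici 0)) {t₁ t₂ : ℝ} (ht₁ : 0 ≤ t₁)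
    (h : t₁ ≤ t₂) (hpos : ∀ u, t₁ ≤ u → u ≤ t₂ → 0 < x₀ + b u + skorokhodRegulator b x₀ u) :
    skorokhodRegulator b x₀ t₁ = skorokhodRegulator b x₀ t₂ := by
  refine le_antisymm (monotoneOn_skorokhodRegulator hb ht₁ (ht₁.trans h) h)
    (max_le (le_max_left _ _) ?_)
  obtain ⟨s, hs, hbs⟩ := exists_eq_runningInf hb (ht₁.trans h)
  rw [← hbs]
  rcases le_total s t₁ with hst₁ | ht₁s
  · exact le_max_of_le_right (by linarith [runningInf_le hb ⟨hs.1, hst₁⟩])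
  · have hms : runningInf b s = b s := le_antisymm (runningInf_le hb ⟨hs.1, le_rfl⟩)
      (hbs ▸ antitoneOn_runningInf hb hs.1 (ht₁.trans h) hs.2)
    have hxs := hpos s ht₁s hs.2
    rw [skorokhodRegulator, hms] at hxs
    refine le_max_of_le_left (le_of_lt (not_le.1 fun hc => ?_))
    rw [max_eq_right hc] at hxs
    linarith

theorem skorokhodPair_skorokhodRegulator (hb : ContinuousOn b (Ici 0)) (hb0 : b 0 = 0)
    (hx₀ : 0 ≤ x₀) :
    SkorokhodPair b x₀ (fun t => x₀ + b t + skorokhodRegulator b x₀ t)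
      (skorokhodRegulator b x₀) := by
  have hlc : ContinuousOn (skorokhodRegulator b x₀) (Ici 0) :=
    continuousOn_const.sup ((continuousOn_runningInf hb).neg.sub continuousOn_const)
  have hl0 : skorokhodRegulator b x₀ 0 = 0 := by
    rw [skorokhodRegulator, runningInf_zero, hb0]
    exact max_eq_left (by linarith)
  refine ⟨(continuousOn_const.add hb).add hlc, hlc, by simp [hl0, hb0], fun t ht => ?_, hl0,
    fun _ _ h₁ h₂ => monotoneOn_skorokhodRegulator hb h₁ (h₁.trans h₂) h₂,
    fun _ _ h₁ h₂ hpos => skorokhodRegulator_eq_of_pos hb h₁ h₂ hpos, fun _ _ => by ring⟩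
  show 0 ≤ x₀ + b t + max 0 (-runningInf b t - x₀)
  linarith [runningInf_le hb ⟨ht, le_rfl⟩, le_max_right 0 (-runningInf b t - x₀)]

theorem SkorokhodPair.skorokhodRegulator_le (h : SkorokhodPair b x₀ x l) (ht : 0 ≤ t) :
    skorokhodRegulator b x₀ t ≤ l t := by
  obtain ⟨-, -, -, hx_nonneg, hl0, hl_mono, -, hx_eq⟩ := h
  refine max_le (hl0 ▸ hl_mono 0 t le_rfl ht) ?_
  have : -l t - x₀ ≤ runningInf b t := le_runningInf ht fun s hs => by
    have := hx_nonneg s hs.1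
    rw [hx_eq s hs.1] at this
    linarith [hl_mono s t hs.1 hs.2]
  linarith

theorem SkorokhodPair.le_skorokhodRegulator (hb : ContinuousOn b (Ici 0))
    (h : SkorokhodPair b x₀ x l) (ht : 0 ≤ t) : l t ≤ skorokhodRegulator b x₀ t := by
  obtain ⟨hxc, hlc, -, hx_nonneg, hl0, hl_mono, hl_flat, hx_eq⟩ := h
  set Z := Icc 0 t ∩ x ⁻¹' {0}
  by_cases hZ : Z.Nonempty
  · have hZc : IsCompact Z := isCompact_Icc.of_isClosed_subset
      ((hxc.mono Icc_subset_Ici_self).preimage_isClosed_of_isClosed isClosed_Icc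
        isClosed_singleton) inter_subset_left
    obtain ⟨s, ⟨hs, hxs⟩, hs_max⟩ := hZc.exists_isGreatest hZ
    have hx_pos : ∀ v ∈ Ioc s t, 0 < x v := fun v hv =>
      (hx_nonneg v (hs.1.trans hv.1.le)).lt_of_ne fun h0 =>
        hv.1.not_ge (hs_max ⟨⟨hs.1.trans hv.1.le, hv.2⟩, h0.symm⟩)
    have hls : l s = l t :=
      (hlc.mono fun u hu => hs.1.trans hu.1).apply_eq_of_forall_mem_Ioc hs.2 fun u hu =>
        hl_flat u t (hs.1.trans hu.1.le) hu.2 fun v hv hvt =>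
          hx_pos v ⟨hu.1.trans_le hv, hvt⟩
    have hl_s : l s = -x₀ - b s := by linarith [hx_eq s hs.1, show x s = 0 from hxs]
    exact le_max_of_le_right (by linarith [runningInf_le hb hs])
  · have : l 0 = l t := hl_flat 0 t le_rfl ht fun u hu hut =>
      (hx_nonneg u hu).lt_of_ne fun h0 => hZ ⟨u, ⟨hu, hut⟩, h0.symm⟩
    exact le_max_of_le_left (by rw [← this, hl0])

theorem SkorokhodPair.eq_skorokhodRegulator (hb : ContinuousOn b (Ici 0))
    (h : SkorokhodPair b x₀ x l) (ht : 0 ≤ t) :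
    x t = x₀ + b t + skorokhodRegulator b x₀ t ∧ l t = skorokhodRegulator b x₀ t := by
  have hl : l t = skorokhodRegulator b x₀ t :=
    le_antisymm (h.le_skorokhodRegulator hb ht) (h.skorokhodRegulator_le ht)
  refine ⟨?_, hl⟩
  rw [h.2.2.2.2.2.2.2 t ht, hl]
  ring

end Skorokhod

/-- **Skorokhod's lemma**: for continuous `b` with `b 0 = 0` and `x₀ ≥ 0`, there is a
pair `(x, l)` satisfying the Skorokhod conditions, unique on `[0, ∞)`, and it is given
explicitly by `l t = max 0 (-m t - x₀)` and `x t = x₀ + b t + max 0 (-m t - x₀)`,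
where `m t = min_{0 ≤ t' ≤ t} b t'`. -/
theorem skorokhod_lemma (b : ℝ → ℝ) (hb : ContinuousOn b (Ici 0)) (hb0 : b 0 = 0)
    (x₀ : ℝ) (hx₀ : 0 ≤ x₀) :
    (∃ x l : ℝ → ℝ, SkorokhodPair b x₀ x l ∧
      (∀ t, 0 ≤ t → l t = max 0 (-(sInf (b '' Icc 0 t)) - x₀)) ∧
      (∀ t, 0 ≤ t → x t = x₀ + b t + max 0 (-(sInf (b '' Icc 0 t)) - x₀))) ∧
    (∀ x₁ l₁ x₂ l₂ : ℝ → ℝ, SkorokhodPair b x₀ x₁ l₁ → SkorokhodPair b x₀ x₂ l₂ →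
      ∀ t, 0 ≤ t → x₁ t = x₂ t ∧ l₁ t = l₂ t) := by
  refine ⟨⟨_, _, skorokhodPair_skorokhodRegulator hb hb0 hx₀, fun _ _ => rfl, fun _ _ => rfl⟩,
    ?_⟩
  intro x₁ l₁ x₂ l₂ h₁ h₂ t ht
  obtain ⟨hx₁, hl₁⟩ := h₁.eq_skorokhodRegulator hb ht
  obtain ⟨hx₂, hl₂⟩ := h₂.eq_skorokhodRegulator hb ht
  exact ⟨hx₁.trans hx₂.symm, hl₁.trans hl₂.symm⟩
end

section
/- Uniqueness part of Skorokhod's lemma: Let b : [0,∞) → ℝ be continuous with b(0) = 0 and let x₀ ≥ 0. Suppose (x₁, l₁) and (x₂, l₂) are two pairs of continuous functions [0,∞) → ℝ each satisfying: x_i(0) = x₀ and x_i(t) ≥ 0 for all t; l_i(0) = 0 and l_i is non-decreasing; l_i is constant on every interval on which x_i is strictly positive; and x_i(t) = x₀ + l_i(t) + b(t) for all t. Then x₁ = x₂ and l₁ = l₂. -/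
/-!
The difference `x₁ - x₂ = l₁ - l₂` does not involve `b`, so by symmetry it suffices to show
`l₁ ≤ l₂`. If `l₁ t > l₂ t`, let `s` be the last time in `[0, t]` with `x₁ s ≤ x₂ s`. On
`(s, t]` we have `x₁ > x₂ ≥ 0`, so `l₁` is flat there and, by continuity, `l₁ t = l₁ s`. Then
`l₁ t = l₁ s ≤ l₂ s ≤ l₂ t`, since `l₁ - l₂ = x₁ - x₂ ≤ 0` at `s` and `l₂` is non-decreasing.
-/

open Set

theorem exists_lastTime_le_of_lt {α β : Type*} [ConditionallyCompleteLinearOrder α]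
    [TopologicalSpace α] [OrderTopology α] [LinearOrder β] [TopologicalSpace β]
    [OrderClosedTopology β] {f g : α → β} {a t : α} (hat : a ≤ t)
    (hf : ContinuousOn f (Icc a t)) (hg : ContinuousOn g (Icc a t))
    (ha : f a ≤ g a) (ht : g t < f t) :
    ∃ s ∈ Ico a t, f s ≤ g s ∧ ∀ u ∈ Ioc s t, g u < f u := by
  have hclosed : IsClosed {u ∈ Icc a t | f u ≤ g u} := isClosed_Icc.isClosed_le hf hg
  obtain ⟨s, ⟨⟨has, hst⟩, hfg⟩, hmax⟩ :=
    (isCompact_Icc.of_isClosed_subset hclosed (sep_subset _ _)).exists_isGreatest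
      ⟨a, ⟨le_rfl, hat⟩, ha⟩
  have hst' : s < t := hst.lt_of_ne fun hs => (hs ▸ hfg).not_gt ht
  refine ⟨s, ⟨has, hst'⟩, hfg, fun u ⟨hsu, hut⟩ => lt_of_not_ge fun hfgu => ?_⟩
  exact (hmax ⟨⟨has.trans hsu.le, hut⟩, hfgu⟩).not_gt hsu

theorem eq_of_continuousOn_Icc_of_forall_Ioc_eq {α β : Type*} [LinearOrder α]
    [TopologicalSpace α] [OrderTopology α] [DenselyOrdered α] [TopologicalSpace β] [T2Space β]
    {l : α → β} {s t : α} {c : β} (hst : s < t) (hl : ContinuousOn l (Icc s t))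
    (hflat : ∀ u ∈ Ioc s t, l u = c) : l s = c := by
  have hclosure : Icc s t ⊆ closure (Ioc s t) := (closure_Ioc hst.ne).symm.subset
  exact EqOn.of_subset_closure (g := fun _ => c) hflat hl continuousOn_const
    Ioc_subset_Icc_self hclosure (left_mem_Icc.2 hst.le)

theorem regulator_le_of_flat {x₁ l₁ x₂ l₂ : ℝ → ℝ}
    (hx₁c : ContinuousOn x₁ (Ici 0)) (hl₁c : ContinuousOn l₁ (Ici 0))
    (hx₂c : ContinuousOn x₂ (Ici 0)) (h0 : x₁ 0 ≤ x₂ 0) (hx₂pos : ∀ t, 0 ≤ t → 0 ≤ x₂ t)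
    (hl₂mono : MonotoneOn l₂ (Ici 0))
    (hl₁flat : ∀ t₁ t₂, 0 ≤ t₁ → t₁ ≤ t₂ → (∀ u, t₁ ≤ u → u ≤ t₂ → 0 < x₁ u) → l₁ t₁ = l₁ t₂)
    (hdiff : ∀ t, 0 ≤ t → x₁ t - x₂ t = l₁ t - l₂ t) {t : ℝ} (ht : 0 ≤ t) :
    l₁ t ≤ l₂ t := by
  by_contra! hlt
  have hxt : x₂ t < x₁ t := by linarith [hdiff t ht]
  obtain ⟨s, ⟨hs0, hst⟩, hxs, hgap⟩ := exists_lastTime_le_of_lt ht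
    (hx₁c.mono Icc_subset_Ici_self) (hx₂c.mono Icc_subset_Ici_self) h0 hxt
  have hx₁pos : ∀ u ∈ Ioc s t, 0 < x₁ u := fun u hu =>
    (hx₂pos u (hs0.trans hu.1.le)).trans_lt (hgap u hu)
  have hl₁st : l₁ s = l₁ t := by
    refine eq_of_continuousOn_Icc_of_forall_Ioc_eq hst (hl₁c.mono fun u hu => hs0.trans hu.1) ?_
    exact fun u hu => hl₁flat u t (hs0.trans hu.1.le) hu.2 fun v hv hvt =>
      hx₁pos v ⟨hu.1.trans_le hv, hvt⟩
  have hls : l₁ s ≤ l₂ s := by linarith [hdiff s hs0]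
  have hl₂st : l₂ s ≤ l₂ t := hl₂mono hs0 (hs0.trans hst.le) hst.le
  linarith

theorem skorokhod_uniqueness_general (b : ℝ → ℝ)
    (x₀ : ℝ) (x₁ l₁ x₂ l₂ : ℝ → ℝ)
    (hx₁c : ContinuousOn x₁ (Ici 0)) (hl₁c : ContinuousOn l₁ (Ici 0))
    (hx₂c : ContinuousOn x₂ (Ici 0)) (hl₂c : ContinuousOn l₂ (Ici 0))
    (hx₁0 : x₁ 0 = x₀) (hx₁pos : ∀ t, 0 ≤ t → 0 ≤ x₁ t)
    (hx₂0 : x₂ 0 = x₀) (hx₂pos : ∀ t, 0 ≤ t → 0 ≤ x₂ t)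
    (hl₁mono : ∀ t₁ t₂, 0 ≤ t₁ → t₁ ≤ t₂ → l₁ t₁ ≤ l₁ t₂)
    (hl₂mono : ∀ t₁ t₂, 0 ≤ t₁ → t₁ ≤ t₂ → l₂ t₁ ≤ l₂ t₂)
    (hl₁flat : ∀ t₁ t₂, 0 ≤ t₁ → t₁ ≤ t₂ → (∀ u, t₁ ≤ u → u ≤ t₂ → 0 < x₁ u) → l₁ t₁ = l₁ t₂)
    (hl₂flat : ∀ t₁ t₂, 0 ≤ t₁ → t₁ ≤ t₂ → (∀ u, t₁ ≤ u → u ≤ t₂ → 0 < x₂ u) → l₂ t₁ = l₂ t₂)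
    (hx₁eq : ∀ t, 0 ≤ t → x₁ t = x₀ + l₁ t + b t)
    (hx₂eq : ∀ t, 0 ≤ t → x₂ t = x₀ + l₂ t + b t) :
    ∀ t, 0 ≤ t → x₁ t = x₂ t ∧ l₁ t = l₂ t := by
  intro t ht
  have hdiff : ∀ u, 0 ≤ u → x₁ u - x₂ u = l₁ u - l₂ u := fun u hu => by
    rw [hx₁eq u hu, hx₂eq u hu]; ring
  have hle : l₁ t ≤ l₂ t := regulator_le_of_flat hx₁c hl₁c hx₂c (by rw [hx₁0, hx₂0]) hx₂pos
    (fun _ ha _ _ hab => hl₂mono _ _ ha hab) hl₁flat hdiff ht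
  have hge : l₂ t ≤ l₁ t := regulator_le_of_flat hx₂c hl₂c hx₁c (by rw [hx₁0, hx₂0]) hx₁pos
    (fun _ ha _ _ hab => hl₁mono _ _ ha hab) hl₂flat (fun u hu => by linarith [hdiff u hu]) ht
  have hl : l₁ t = l₂ t := hle.antisymm hge
  exact ⟨by rw [hx₁eq t ht, hx₂eq t ht, hl], hl⟩

/-- **Uniqueness part of Skorokhod's lemma**: for `b` continuous on `[0, ∞)` with `b 0 = 0`
and `x₀ ≥ 0`, any two pairs `(x₁, l₁)` and `(x₂, l₂)` of functions continuous on `[0, ∞)`,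
each satisfying `xᵢ 0 = x₀`, `xᵢ t ≥ 0` for `t ≥ 0`, `lᵢ 0 = 0`, `lᵢ` non-decreasing on
`[0, ∞)`, `lᵢ` constant on every interval on which `xᵢ` is strictly positive, and
`xᵢ t = x₀ + lᵢ t + b t` for `t ≥ 0`, must coincide on `[0, ∞)`. -/
theorem skorokhod_uniqueness (b : ℝ → ℝ) (hb : ContinuousOn b (Ici 0)) (hb0 : b 0 = 0)
    (x₀ : ℝ) (hx₀ : 0 ≤ x₀) (x₁ l₁ x₂ l₂ : ℝ → ℝ)
    (hx₁c : ContinuousOn x₁ (Ici 0)) (hl₁c : ContinuousOn l₁ (Ici 0))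
    (hx₂c : ContinuousOn x₂ (Ici 0)) (hl₂c : ContinuousOn l₂ (Ici 0))
    (hx₁0 : x₁ 0 = x₀) (hx₁pos : ∀ t, 0 ≤ t → 0 ≤ x₁ t)
    (hx₂0 : x₂ 0 = x₀) (hx₂pos : ∀ t, 0 ≤ t → 0 ≤ x₂ t)
    (hl₁0 : l₁ 0 = 0) (hl₁mono : ∀ t₁ t₂, 0 ≤ t₁ → t₁ ≤ t₂ → l₁ t₁ ≤ l₁ t₂)
    (hl₂0 : l₂ 0 = 0) (hl₂mono : ∀ t₁ t₂, 0 ≤ t₁ → t₁ ≤ t₂ → l₂ t₁ ≤ l₂ t₂)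
    (hl₁flat : ∀ t₁ t₂, 0 ≤ t₁ → t₁ ≤ t₂ → (∀ u, t₁ ≤ u → u ≤ t₂ → 0 < x₁ u) → l₁ t₁ = l₁ t₂)
    (hl₂flat : ∀ t₁ t₂, 0 ≤ t₁ → t₁ ≤ t₂ → (∀ u, t₁ ≤ u → u ≤ t₂ → 0 < x₂ u) → l₂ t₁ = l₂ t₂)
    (hx₁eq : ∀ t, 0 ≤ t → x₁ t = x₀ + l₁ t + b t)
    (hx₂eq : ∀ t, 0 ≤ t → x₂ t = x₀ + l₂ t + b t) :
    ∀ t, 0 ≤ t → x₁ t = x₂ t ∧ l₁ t = l₂ t :=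
  skorokhod_uniqueness_general b x₀ x₁ l₁ x₂ l₂ hx₁c hl₁c hx₂c hl₂c hx₁0 hx₁pos hx₂0 hx₂pos hl₁mono
    hl₂mono hl₁flat hl₂flat hx₁eq hx₂eq
end

section
/- Explicit formula in Skorokhod's lemma: Let b : [0,∞) → ℝ be continuous with b(0) = 0, let x₀ ≥ 0, and suppose (x, l) is a pair of continuous functions [0,∞) → ℝ satisfying: x(0) = x₀ and x(t) ≥ 0 for all t; l(0) = 0 and l is non-decreasing; l is constant on every interval on which x is strictly positive; and x(t) = x₀ + l(t) + b(t) for all t. Then necessarily l(t) = max(0, −m(t) − x₀) for all t ≥ 0, where m(t) = min_{0 ≤ t' ≤ t} b(t'). -/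
/-!
Write `M = max 0 (-m t - x₀)`. Since `x ≥ 0` and `l` is non-decreasing, `-x₀ - l t ≤ b u` for
every `u ≤ t`, so `M ≤ l t`. Conversely, wherever `l > M` we get
`x = x₀ + l + b > x₀ + M + m t ≥ 0`, so `l` is flat there. If `l t > M`, let `s` be the last time
in `[0, t]` with `l s ≤ M`: then `l` is constant on `(s, t]`, and continuity at `s` forces
`l s = l t > M`, a contradiction.
-/

open Set

section

variable {α β : Type*} [TopologicalSpace α] [LinearOrder α] [OrderTopology α] [DenselyOrdered α]

theorem ContinuousOn.eq_of_forall_Ioc_eq [TopologicalSpace β] [T1Space β] {f : α → β} {a b : α}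
    {c : β} (hf : ContinuousOn f (Icc a b)) (hab : a < b) (h : ∀ u ∈ Ioc a b, f u = c) :
    f a = c := by
  have hclosed : IsClosed (Icc a b ∩ f ⁻¹' {c}) :=
    hf.preimage_isClosed_of_isClosed isClosed_Icc isClosed_singleton
  have hsub : closure (Ioc a b) ⊆ Icc a b ∩ f ⁻¹' {c} :=
    closure_minimal (fun u hu => ⟨Ioc_subset_Icc_self hu, h u hu⟩) hclosed
  rw [closure_Ioc hab.ne] at hsub
  exact (hsub (left_mem_Icc.2 hab.le)).2

theorem ContinuousOn.le_of_forall_Icc_lt_imp_eq [CompactIccSpace α] [TopologicalSpace β]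
    [LinearOrder β] [OrderClosedTopology β] {l : α → β} {a b : α} {M : β}
    (hl : ContinuousOn l (Icc a b)) (hab : a ≤ b) (ha : l a ≤ M)
    (hflat : ∀ s ∈ Icc a b, (∀ u ∈ Icc s b, M < l u) → l s = l b) : l b ≤ M := by
  by_contra! hbM
  have hK : IsCompact (Icc a b ∩ l ⁻¹' Iic M) :=
    isCompact_Icc.of_isClosed_subset
      (hl.preimage_isClosed_of_isClosed isClosed_Icc isClosed_Iic) inter_subset_left
  obtain ⟨s, ⟨hs, hlsM⟩, hsmax⟩ := hK.exists_isGreatest ⟨a, left_mem_Icc.2 hab, ha⟩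
  have hsb : s < b := hs.2.lt_of_ne (by rintro rfl; exact hlsM.not_gt hbM)
  have habove : ∀ u ∈ Ioc s b, M < l u := fun u hu =>
    lt_of_not_ge fun hu' => hu.1.not_ge (hsmax ⟨⟨hs.1.trans hu.1.le, hu.2⟩, hu'⟩)
  have hls : l s = l b :=
    (hl.mono (Icc_subset_Icc_left hs.1)).eq_of_forall_Ioc_eq hsb fun u hu =>
      hflat u ⟨hs.1.trans hu.1.le, hu.2⟩ fun v hv => habove v ⟨hu.1.trans_le hv.1, hv.2⟩
  exact hlsM.not_gt (hls ▸ hbM)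

end

theorem skorokhod_explicit_formula_general (b : ℝ → ℝ) (hb : ContinuousOn b (Ici 0))
    (x₀ : ℝ) (x l : ℝ → ℝ)
    (hlc : ContinuousOn l (Ici 0))
    (hxpos : ∀ t, 0 ≤ t → 0 ≤ x t)
    (hl0 : l 0 = 0) (hlmono : ∀ t₁ t₂, 0 ≤ t₁ → t₁ ≤ t₂ → l t₁ ≤ l t₂)
    (hlflat : ∀ t₁ t₂, 0 ≤ t₁ → t₁ ≤ t₂ → (∀ u, t₁ ≤ u → u ≤ t₂ → 0 < x u) → l t₁ = l t₂)
    (hxeq : ∀ t, 0 ≤ t → x t = x₀ + l t + b t) :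
    ∀ t, 0 ≤ t → l t = max 0 (-(sInf (b '' Icc 0 t)) - x₀) := by
  intro t ht
  set m := sInf (b '' Icc 0 t)
  have hm : ∀ u ∈ Icc 0 t, m ≤ b u := fun u hu =>
    csInf_le (isCompact_Icc.bddBelow_image (hb.mono Icc_subset_Ici_self)) (mem_image_of_mem b hu)
  have hlower : -m - x₀ ≤ l t := by
    have : -x₀ - l t ≤ m := le_csInf ((nonempty_Icc.2 ht).image b) <| by
      rintro _ ⟨u, hu, rfl⟩
      linarith [hxpos u hu.1, hlmono u t hu.1 hu.2, hxeq u hu.1]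
    linarith
  have hupper : l t ≤ max 0 (-m - x₀) := by
    refine (hlc.mono Icc_subset_Ici_self).le_of_forall_Icc_lt_imp_eq ht
      (by rw [hl0]; exact le_max_left _ _)
      fun s hs hgt => hlflat s t hs.1 hs.2 fun u hsu hut => ?_
    have hu : u ∈ Icc 0 t := ⟨hs.1.trans hsu, hut⟩
    linarith [hgt u ⟨hsu, hut⟩, hm u hu, hxeq u hu.1, le_max_right 0 (-m - x₀)]
  exact le_antisymm hupper (max_le (hl0 ▸ hlmono 0 t le_rfl ht) hlower)

/-- **Explicit formula in Skorokhod's lemma**: for `b` continuous on `[0, ∞)` with `b 0 = 0`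
and `x₀ ≥ 0`, if the pair `(x, l)` of functions continuous on `[0, ∞)` satisfies the
Skorokhod conditions (`x 0 = x₀`, `x t ≥ 0` for `t ≥ 0`, `l 0 = 0`, `l` non-decreasing,
`l` constant on every interval on which `x` is strictly positive, and
`x t = x₀ + l t + b t` for `t ≥ 0`), then necessarily
`l t = max 0 (-m t - x₀)` for all `t ≥ 0`, where `m t = min_{0 ≤ t' ≤ t} b t'`. -/
theorem skorokhod_explicit_formula (b : ℝ → ℝ) (hb : ContinuousOn b (Ici 0)) (hb0 : b 0 = 0)
    (x₀ : ℝ) (hx₀ : 0 ≤ x₀) (x l : ℝ → ℝ)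
    (hxc : ContinuousOn x (Ici 0)) (hlc : ContinuousOn l (Ici 0))
    (hx0 : x 0 = x₀) (hxpos : ∀ t, 0 ≤ t → 0 ≤ x t)
    (hl0 : l 0 = 0) (hlmono : ∀ t₁ t₂, 0 ≤ t₁ → t₁ ≤ t₂ → l t₁ ≤ l t₂)
    (hlflat : ∀ t₁ t₂, 0 ≤ t₁ → t₁ ≤ t₂ → (∀ u, t₁ ≤ u → u ≤ t₂ → 0 < x u) → l t₁ = l t₂)
    (hxeq : ∀ t, 0 ≤ t → x t = x₀ + l t + b t) :
    ∀ t, 0 ≤ t → l t = max 0 (-(sInf (b '' Icc 0 t)) - x₀) :=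
  skorokhod_explicit_formula_general b hb x₀ x l hlc hxpos hl0 hlmono hlflat hxeq
end

section
/- The explicit Skorokhod local-time term increases only on the zero set of the reflected path: Let b : [0,∞) → ℝ be continuous with b(0) = 0, let x₀ ≥ 0, and set m(t) = min_{0 ≤ t' ≤ t} b(t'), l(t) = max(0, −m(t) − x₀), x(t) = x₀ + b(t) + l(t). Then for all 0 ≤ t₁ ≤ t₂ with l(t₁) < l(t₂), there exists u ∈ [t₁, t₂] with x(u) = 0. -/
/-!
Let `u` be a point where `b` attains its minimum on `[0, t₂]`. Then `m s = b u` for every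
`s ∈ [u, t₂]`, so `l` is constant there; since `l t₁ < l t₂`, this forces `t₁ < u`. At `u` the
running minimum is the current value, `m u = b u`, and `l u = l t₂ > 0`, so
`l u = -b u - x₀` and `x u = 0`.
-/

open Set

theorem IsMinOn.csInf_image_eq {α β : Type*} [ConditionallyCompleteLattice β] {f : α → β}
    {s t : Set α} {a : α} (hf : IsMinOn f t a) (hst : s ⊆ t) (ha : a ∈ s) :
    sInf (f '' s) = f a :=
  IsLeast.csInf_eq ⟨mem_image_of_mem f ha, forall_mem_image.2 fun _ hx => hf (hst hx)⟩

theorem skorokhod_increases_only_on_zero_set_general (b : ℝ → ℝ)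
    (hb : ContinuousOn b (Ici 0))
    (x₀ : ℝ) (m l x : ℝ → ℝ)
    (hm : ∀ t, m t = sInf (b '' Icc 0 t))
    (hl : ∀ t, l t = max 0 (-(m t) - x₀))
    (hx : ∀ t, x t = x₀ + b t + l t) :
    ∀ t₁ t₂, 0 ≤ t₁ → t₁ ≤ t₂ → l t₁ < l t₂ → ∃ u, t₁ ≤ u ∧ u ≤ t₂ ∧ x u = 0 := by
  intro t₁ t₂ ht₁ ht₁₂ hl₁₂
  obtain ⟨u, hu, hmin⟩ := isCompact_Icc.exists_isMinOn (nonempty_Icc.2 (ht₁.trans ht₁₂))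
    (hb.mono Icc_subset_Ici_self)
  have hm_eq : ∀ s, u ≤ s → s ≤ t₂ → m s = b u := fun s hus hst =>
    (hm s).trans (hmin.csInf_image_eq (Icc_subset_Icc_right hst) ⟨hu.1, hus⟩)
  have hl_eq : l u = l t₂ := by rw [hl, hl, hm_eq u le_rfl hu.2, hm_eq t₂ hu.2 le_rfl]
  have ht₁u : t₁ ≤ u := by
    by_contra! hut₁
    have : l t₁ = l t₂ := by rw [hl, hl, hm_eq t₁ hut₁.le ht₁₂, hm_eq t₂ hu.2 le_rfl]
    exact hl₁₂.ne this
  have hlu : l u = -b u - x₀ := by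
    have hl_pos : 0 < l u := hl_eq ▸ (le_max_left _ _).trans_lt ((hl t₁).symm ▸ hl₁₂)
    rw [hl, hm_eq u le_rfl hu.2] at hl_pos ⊢
    exact max_eq_right (by simpa using hl_pos : 0 < -b u - x₀).le
  exact ⟨u, ht₁u, hu.2, by rw [hx, hlu]; ring⟩

/-- **The explicit Skorokhod local-time term increases only on the zero set of the reflected
path**: for `b` continuous on `[0, ∞)` with `b 0 = 0` and `x₀ ≥ 0`, set
`m t = min_{0 ≤ t' ≤ t} b t'`, `l t = max 0 (-m t - x₀)` and `x t = x₀ + b t + l t`.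
Then whenever `0 ≤ t₁ ≤ t₂` and `l t₁ < l t₂`, there is some `u ∈ [t₁, t₂]` with `x u = 0`. -/
theorem skorokhod_increases_only_on_zero_set (b : ℝ → ℝ)
    (hb : ContinuousOn b (Ici 0)) (hb0 : b 0 = 0)
    (x₀ : ℝ) (hx₀ : 0 ≤ x₀) (m l x : ℝ → ℝ)
    (hm : ∀ t, m t = sInf (b '' Icc 0 t))
    (hl : ∀ t, l t = max 0 (-(m t) - x₀))
    (hx : ∀ t, x t = x₀ + b t + l t) :
    ∀ t₁ t₂, 0 ≤ t₁ → t₁ ≤ t₂ → l t₁ < l t₂ → ∃ u, t₁ ≤ u ∧ u ≤ t₂ ∧ x u = 0 :=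
  skorokhod_increases_only_on_zero_set_general b hb x₀ m l x hm hl hx
end

section
/- Convolution semigroup property (infinite divisibility) of the one-sided stable density of index 1/2: For real a > 0 and a' > 0, define f_a(t) = (a / √(2π)) · t^{-3/2} · e^{-a²/(2t)} for t > 0. Then for every t > 0, ∫₀^t f_a(u) · f_{a'}(t − u) du = f_{a+a'}(t). -/
/-!
Substituting `u = t / (1 + s²)` maps `s ∈ (0, ∞)` onto `u ∈ (0, t)`, and since
`a² / u + a'² / (t - u) = ((a + a')² + (a s - a' / s)²) / t`, the convolution integral becomes
`a a' / (π t²) · e^{-(a + a')² / (2t)} · ∫₀^∞ (1 + s⁻²) exp (-(a s - a' / s)² / (2t)) ds`.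
The remaining integral is of Cauchy–Schlömilch type: `x = α s - β / s` maps `(0, ∞)` onto `ℝ`
with Jacobian `α + β / s²`, and for an even `g` the inversion `s ↦ β / (α s)` shows that the two
parts of the Jacobian contribute equally, so
`∫₀^∞ (γ + δ / s²) g (α s - β / s) ds = (γ / (2α) + δ / (2β)) ∫ g`.
For the Gaussian `g` this is `√(2πt) (a + a') / (2 a a')`, which gives `f_{a+a'}(t)`.
-/

open Set Real

/-- The one-sided stable density of index `1/2` with parameter `a`:
`f_a(t) = (a / √(2π)) t^{-3/2} e^{-a²/(2t)}` for `t > 0`. -/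
noncomputable def stableHalfDensity (a t : ℝ) : ℝ :=
  a / Real.sqrt (2 * π) * t ^ (-(3 : ℝ) / 2) * Real.exp (-a ^ 2 / (2 * t))

open MeasureTheory

section CauchySchlomilch

variable {E : Type*} [NormedAddCommGroup E] [NormedSpace ℝ E] {α β : ℝ}

theorem hasDerivAt_mul_sub_div (α β : ℝ) {s : ℝ} (hs : s ≠ 0) :
    HasDerivAt (fun s => α * s - β / s) (α + β / s ^ 2) s := by
  have h : HasDerivAt (fun s => α * s - β * s⁻¹) (α * 1 - β * -(s ^ 2)⁻¹) s :=
    ((hasDerivAt_id' s).const_mul α).sub ((hasDerivAt_inv hs).const_mul β)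
  simpa [div_eq_mul_inv] using h

theorem strictMonoOn_mul_sub_div (hα : 0 < α) (hβ : 0 < β) :
    StrictMonoOn (fun s => α * s - β / s) (Ioi 0) := fun x hx y _ hxy => by
  have := div_lt_div_of_pos_left hβ hx hxy
  dsimp only
  nlinarith

theorem image_mul_sub_div_Ioi (hα : 0 < α) (hβ : 0 < β) :
    (fun s => α * s - β / s) '' Ioi 0 = univ := by
  refine eq_univ_of_forall fun x => ?_
  -- the positive root of `α s² - x s - β = 0`
  set r := √(x ^ 2 + 4 * α * β)
  have hr : r ^ 2 = x ^ 2 + 4 * α * β := sq_sqrt (by positivity)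
  have habs : |x| < r := by
    rw [← sqrt_sq_eq_abs]; exact sqrt_lt_sqrt (sq_nonneg x) (by nlinarith [mul_pos hα hβ])
  have hpos : 0 < x + r := by linarith [neg_abs_le x]
  refine ⟨(x + r) / (2 * α), mem_Ioi.2 (by positivity), ?_⟩
  field_simp
  linear_combination hr

theorem integral_Ioi_smul_comp_mul_sub_div (hα : 0 < α) (hβ : 0 < β) (g : ℝ → E) :
    ∫ s in Ioi 0, (α + β / s ^ 2) • g (α * s - β / s) = ∫ x, g x := by
  have h := integral_image_eq_integral_abs_deriv_smul measurableSet_Ioi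
    (fun s hs => (hasDerivAt_mul_sub_div α β (ne_of_gt hs)).hasDerivWithinAt)
    (strictMonoOn_mul_sub_div hα hβ).injOn g
  rw [image_mul_sub_div_Ioi hα hβ, setIntegral_univ] at h
  rw [h]
  refine setIntegral_congr_fun measurableSet_Ioi fun s _ => ?_
  rw [abs_of_pos (by positivity)]

theorem integrableOn_Ioi_smul_comp_mul_sub_div (hα : 0 < α) (hβ : 0 < β) (γ δ : ℝ) {g : ℝ → E}
    (hg : Integrable g) :
    IntegrableOn (fun s => (γ + δ / s ^ 2) • g (α * s - β / s)) (Ioi 0) := by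
  have h := integrableOn_image_iff_integrableOn_abs_deriv_smul measurableSet_Ioi
    (fun s hs => (hasDerivAt_mul_sub_div α β (ne_of_gt hs)).hasDerivWithinAt)
    (strictMonoOn_mul_sub_div hα hβ).injOn g
  rw [image_mul_sub_div_Ioi hα hβ, integrableOn_univ] at h
  have hbound (s : ℝ) : ‖(γ * s ^ 2 + δ) / (α * s ^ 2 + β)‖ ≤ |γ| / α + |δ| / β := by
    have hD : 0 < α * s ^ 2 + β := by positivity
    calc ‖(γ * s ^ 2 + δ) / (α * s ^ 2 + β)‖ = |γ * s ^ 2 + δ| / (α * s ^ 2 + β) := by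
          rw [norm_div, Real.norm_eq_abs, Real.norm_eq_abs, abs_of_pos hD]
      _ ≤ (|γ| * s ^ 2 + |δ|) / (α * s ^ 2 + β) := by
          gcongr
          exact (abs_add_le _ _).trans_eq (by rw [abs_mul, abs_of_nonneg (sq_nonneg s)])
      _ = |γ| * (s ^ 2 / (α * s ^ 2 + β)) + |δ| / (α * s ^ 2 + β) := by ring
      _ ≤ |γ| * (1 / α) + |δ| / β := by
          refine add_le_add (mul_le_mul_of_nonneg_left ?_ (abs_nonneg γ))
            (div_le_div_of_nonneg_left (abs_nonneg δ) hβ (by nlinarith))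
          rw [div_le_div_iff₀ hD hα]; linarith
      _ = |γ| / α + |δ| / β := by ring
  have hmeas : Measurable fun s : ℝ => (γ * s ^ 2 + δ) / (α * s ^ 2 + β) := by fun_prop
  refine IntegrableOn.congr_fun ((h.1 hg).bdd_smul _ hmeas.aestronglyMeasurable
    (ae_of_all _ hbound)) (fun s hs => ?_) measurableSet_Ioi
  have hs : s ≠ 0 := ne_of_gt hs
  simp only [Pi.smul_apply', abs_of_pos (by positivity : 0 < α + β / s ^ 2), smul_smul]
  congr 1
  field_simp

theorem integral_Ioi_div_sq_smul_comp_div {γ : ℝ} (hγ : 0 < γ) (h : ℝ → E) :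
    ∫ s in Ioi 0, (γ / s ^ 2) • h (γ / s) = ∫ s in Ioi 0, h s := by
  have himage : (fun s => γ / s) '' Ioi 0 = Ioi 0 := by
    ext x
    refine ⟨fun ⟨s, hs, hsx⟩ => hsx ▸ div_pos hγ hs, fun hx => ?_⟩
    exact ⟨γ / x, div_pos hγ hx, div_div_cancel₀ hγ.ne'⟩
  have hderiv (s : ℝ) (hs : s ∈ Ioi 0) :
      HasDerivWithinAt (fun s => γ / s) (-(γ / s ^ 2)) (Ioi 0) s := by
    have h := (hasDerivAt_inv (ne_of_gt hs)).const_mul γ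
    simp only [mul_neg, ← div_eq_mul_inv] at h
    exact h.hasDerivWithinAt
  have hinj : InjOn (fun s => γ / s) (Ioi 0) := fun x _ y _ hxy =>
    inv_injective (mul_left_cancel₀ hγ.ne' hxy)
  have h := integral_image_eq_integral_abs_deriv_smul measurableSet_Ioi hderiv hinj h
  rw [himage] at h
  rw [h]
  refine setIntegral_congr_fun measurableSet_Ioi fun s _ => ?_
  rw [abs_neg, abs_of_nonneg (by positivity)]

theorem integral_Ioi_div_sq_smul_comp_mul_sub_div (hα : 0 < α) (hβ : 0 < β) (g : ℝ → E) :
    ∫ s in Ioi 0, (β / s ^ 2) • g (α * s - β / s) = α • ∫ s in Ioi 0, g (β / s - α * s) := by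
  rw [← integral_Ioi_div_sq_smul_comp_div (div_pos hβ hα), ← integral_smul]
  refine setIntegral_congr_fun measurableSet_Ioi fun s hs => ?_
  have hs : s ≠ 0 := ne_of_gt hs
  rw [smul_smul]
  congr 2 <;> field_simp

theorem integral_Ioi_smul_comp_mul_sub_div_of_even (hα : 0 < α) (hβ : 0 < β) (γ δ : ℝ)
    {g : ℝ → E} (hg : Integrable g) (hg_even : ∀ x, g (-x) = g x) :
    ∫ s in Ioi 0, (γ + δ / s ^ 2) • g (α * s - β / s) =
      (γ / (2 * α) + δ / (2 * β)) • ∫ x, g x := by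
  set A := ∫ s in Ioi 0, g (α * s - β / s)
  set B := ∫ s in Ioi 0, (s ^ 2)⁻¹ • g (α * s - β / s)
  have hsplit (γ δ : ℝ) : ∫ s in Ioi 0, (γ + δ / s ^ 2) • g (α * s - β / s) = γ • A + δ • B := by
    rw [← integral_smul, ← integral_smul, ← integral_add]
    · refine setIntegral_congr_fun measurableSet_Ioi fun s _ => ?_
      rw [smul_smul, add_smul, div_eq_mul_inv δ]
    · have h := integrableOn_Ioi_smul_comp_mul_sub_div hα hβ γ 0 hg
      simp only [zero_div, add_zero] at h
      exact h
    · have h := integrableOn_Ioi_smul_comp_mul_sub_div hα hβ 0 δ hg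
      simp only [zero_add, div_eq_mul_inv δ, ← smul_smul] at h
      exact h
  have hsum : α • A + β • B = ∫ x, g x := by
    rw [← hsplit, integral_Ioi_smul_comp_mul_sub_div hα hβ]
  have hsym : β • B = α • A := by
    have h := integral_Ioi_div_sq_smul_comp_mul_sub_div hα hβ g
    simp only [← neg_sub (α * _), hg_even] at h
    have h0 := hsplit 0 β
    simp only [zero_add, zero_smul] at h0
    rw [← h0, h]
  have hA : A = (2 * α)⁻¹ • ∫ x, g x := by
    rw [eq_inv_smul_iff₀ (by positivity), ← hsum, hsym, two_mul, add_smul]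
  have hB : B = (2 * β)⁻¹ • ∫ x, g x := by
    rw [eq_inv_smul_iff₀ (by positivity), ← hsum, ← hsym, two_mul, add_smul]
  rw [hsplit, hA, hB, smul_smul, smul_smul, ← add_smul]
  congr 1

end CauchySchlomilch

section Substitution

variable {t : ℝ}

theorem hasDerivAt_div_one_add_sq (t s : ℝ) :
    HasDerivAt (fun s => t / (1 + s ^ 2)) (-(2 * t * s / (1 + s ^ 2) ^ 2)) s := by
  refine ((hasDerivAt_const s t).div ((hasDerivAt_pow 2 s).const_add 1)
    (by positivity)).congr_deriv ?_
  push_cast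
  ring

theorem strictAntiOn_div_one_add_sq (ht : 0 < t) :
    StrictAntiOn (fun s => t / (1 + s ^ 2)) (Ioi 0) := fun x hx y _ hxy =>
  div_lt_div_of_pos_left ht (by positivity) (by gcongr; exact le_of_lt hx)

theorem image_div_one_add_sq_Ioi (ht : 0 < t) :
    (fun s => t / (1 + s ^ 2)) '' Ioi 0 = Ioo 0 t := by
  ext u
  constructor
  · rintro ⟨s, hs, rfl⟩
    have hs : 0 < s := hs
    exact ⟨by positivity, div_lt_self ht (by nlinarith)⟩
  · rintro ⟨hu, hut⟩
    have hs2 : √(t / u - 1) ^ 2 = t / u - 1 :=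
      sq_sqrt (sub_nonneg.2 ((one_le_div hu).2 hut.le))
    refine ⟨√(t / u - 1), sqrt_pos.2 (sub_pos.2 ((one_lt_div hu).2 hut)), ?_⟩
    simp only [hs2, add_sub_cancel, div_div_cancel₀ ht.ne']

end Substitution

theorem sq_rpow_neg_three_div_two {x : ℝ} (hx : 0 ≤ x) : (x ^ 2) ^ (-(3 : ℝ) / 2) = (x ^ 3)⁻¹ := by
  rw [← rpow_natCast, ← rpow_mul hx]
  norm_num

theorem stableHalfDensity_mul_stableHalfDensity (a b : ℝ) {u v : ℝ} (hu : 0 ≤ u) (hv : 0 ≤ v) :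
    stableHalfDensity a u * stableHalfDensity b v =
      a * b / (2 * π) * (u * v) ^ (-(3 : ℝ) / 2) * exp (-a ^ 2 / (2 * u) + -b ^ 2 / (2 * v)) := by
  rw [stableHalfDensity, stableHalfDensity, mul_rpow hu hv, exp_add]
  have h : √(2 * π) ^ 2 = 2 * π := sq_sqrt (by positivity)
  field_simp
  rw [h]
  ring

theorem abs_deriv_mul_stableHalfDensity_mul_stableHalfDensity (a b : ℝ) {t s : ℝ} (ht : 0 < t)
    (hs : 0 < s) :
    |-(2 * t * s / (1 + s ^ 2) ^ 2)| *
        (stableHalfDensity a (t / (1 + s ^ 2)) * stableHalfDensity b (t - t / (1 + s ^ 2))) =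
      a * b / (π * t ^ 2) * exp (-(a + b) ^ 2 / (2 * t)) *
        ((1 + 1 / s ^ 2) * exp (-(2 * t)⁻¹ * (a * s - b / s) ^ 2)) := by
  have hv : t - t / (1 + s ^ 2) = t * s ^ 2 / (1 + s ^ 2) := by field_simp; ring
  have huv : t / (1 + s ^ 2) * (t - t / (1 + s ^ 2)) = (t * s / (1 + s ^ 2)) ^ 2 := by
    rw [hv]; ring
  have hexp : -a ^ 2 / (2 * (t / (1 + s ^ 2))) + -b ^ 2 / (2 * (t - t / (1 + s ^ 2))) =
      -(a + b) ^ 2 / (2 * t) + -(2 * t)⁻¹ * (a * s - b / s) ^ 2 := by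
    rw [hv]; field_simp; ring
  rw [stableHalfDensity_mul_stableHalfDensity a b (by positivity) (by rw [hv]; positivity), huv,
    sq_rpow_neg_three_div_two (by positivity), hexp, exp_add, abs_neg, abs_of_pos (by positivity)]
  field_simp
  ring

/-- **Convolution semigroup property (infinite divisibility) of the one-sided stable density
of index 1/2**: for reals `a > 0` and `a' > 0` and every `t > 0`,
`∫₀^t f_a(u) f_{a'}(t - u) du = f_{a+a'}(t)`. -/
theorem stable_half_density_convolution (a a' : ℝ) (ha : 0 < a) (ha' : 0 < a') :
    ∀ t : ℝ, 0 < t →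
      ∫ u in Ioo (0 : ℝ) t, stableHalfDensity a u * stableHalfDensity a' (t - u) =
        stableHalfDensity (a + a') t := by
  intro t ht
  have hcov := integral_image_eq_integral_abs_deriv_smul measurableSet_Ioi
    (fun s _ => (hasDerivAt_div_one_add_sq t s).hasDerivWithinAt)
    (strictAntiOn_div_one_add_sq ht).injOn
    (fun u => stableHalfDensity a u * stableHalfDensity a' (t - u))
  have hgauss : Integrable (fun x : ℝ => exp (-(2 * t)⁻¹ * x ^ 2)) :=
    integrable_exp_neg_mul_sq (by positivity)
  rw [image_div_one_add_sq_Ioi ht] at hcov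
  simp only [smul_eq_mul] at hcov
  rw [hcov, setIntegral_congr_fun measurableSet_Ioi fun s hs =>
      abs_deriv_mul_stableHalfDensity_mul_stableHalfDensity a a' ht hs, integral_const_mul]
  have hschlomilch :=
    integral_Ioi_smul_comp_mul_sub_div_of_even ha ha' 1 1 hgauss (fun x => by simp)
  simp only [smul_eq_mul] at hschlomilch
  rw [hschlomilch, integral_gaussian]
  have hsqrt : √(π / (2 * t)⁻¹) = √(2 * π) * √t := by
    rw [div_inv_eq_mul, ← sqrt_mul (by positivity)]; ring_nf
  have hrpow : t ^ (-(3 : ℝ) / 2) = (√t ^ 3)⁻¹ := by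
    rw [← sq_rpow_neg_three_div_two (sqrt_nonneg t), sq_sqrt ht.le]
  rw [stableHalfDensity, hrpow, hsqrt]
  field_simp
  rw [show √t ^ 4 = (√t ^ 2) ^ 2 by ring, sq_sqrt ht.le, sq_sqrt (by positivity)]
  ring
end
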